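/- arXiv:2603.20604 — 2 statements merged into one kernel-verified Lean document; each statement's English description precedes it below -/
import Mathlib

section
/- Value difference bound via model error: with the setup of the telescoping identity, if for all s and h we have |r_h(s) - r'_h(s)| ≤ ε_r, ‖P_h(·|s) - P'_h(·|s)‖₁ ≤ ε_P, and ‖V_{h+1}‖_∞ ≤ H, then |Σ_s ρ(s)(V_1 - V'_1)(s)| ≤ H(ε_r + H·ε_P). -/
lemma pmf_sum_one {S : Type*} [Fintype S] (p : PMF S) :
    ∑ s, (p s).toReal = 1 := by
  have h := p.tsum_coe
  rw [tsum_fintype] at h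
  have h2 := congrArg ENNReal.toReal h
  rwa [ENNReal.toReal_sum (fun a _ => p.apply_ne_top a)] at h2

/-- Value difference bound via model error. -/
theorem stmt_10 {S : Type*} [Fintype S] (H : ℕ)
    (r r' : ℕ → S → ℝ) (P P' : ℕ → S → PMF S)
    (T T' : ℕ → (S → ℝ) → (S → ℝ))
    (hT : ∀ h f s, T h f s = r h s + ∑ s', ((P h s) s').toReal * f s')
    (hT' : ∀ h f s, T' h f s = r' h s + ∑ s', ((P' h s) s').toReal * f s')
    (V V' : ℕ → S → ℝ)
    (hVend : ∀ s, V (H + 1) s = 0) (hV'end : ∀ s, V' (H + 1) s = 0)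
    (hV : ∀ h, 1 ≤ h → h ≤ H → ∀ s, V h s = T h (V (h + 1)) s)
    (hV' : ∀ h, 1 ≤ h → h ≤ H → ∀ s, V' h s = T' h (V' (h + 1)) s)
    (ρ : PMF S)
    (εr εP : ℝ)
    (hr : ∀ h, 1 ≤ h → h ≤ H → ∀ s, |r h s - r' h s| ≤ εr)
    (hPb : ∀ h, 1 ≤ h → h ≤ H → ∀ s,
      ∑ s', |((P h s) s').toReal - ((P' h s) s').toReal| ≤ εP)
    (hVb : ∀ h, 1 ≤ h → h ≤ H → ∀ s, |V (h + 1) s| ≤ (H : ℝ)) :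
    |∑ s, (ρ s).toReal * (V 1 s - V' 1 s)| ≤ (H : ℝ) * (εr + H * εP) := by
  obtain ⟨s₀, -⟩ := ρ.support_nonempty
  rcases Nat.eq_zero_or_pos H with hH | hH
  · subst hH
    have h0 : ∀ s, V 1 s = 0 := by simpa using hVend
    have h0' : ∀ s, V' 1 s = 0 := by simpa using hV'end
    simp [h0, h0']
  -- H ≥ 1
  have hεr : 0 ≤ εr := le_trans (abs_nonneg _) (hr 1 le_rfl hH s₀)
  have hεP : 0 ≤ εP :=
    le_trans (Finset.sum_nonneg fun s _ => abs_nonneg _) (hPb 1 le_rfl hH s₀)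
  set B : ℝ := εr + (H : ℝ) * εP with hBdef
  have hB : 0 ≤ B := by positivity
  have key : ∀ k, k ≤ H → ∀ s, |V (H + 1 - k) s - V' (H + 1 - k) s| ≤ k * B := by
    intro k
    induction k with
    | zero => intro _ s; simp [hVend, hV'end]
    | succ k ih =>
      intro hk s
      have hk' : k ≤ H := Nat.le_of_succ_le hk
      have h1 : 1 ≤ H + 1 - (k + 1) := by omega
      have h2 : H + 1 - (k + 1) ≤ H := by omega
      set h := H + 1 - (k + 1) with hh
      have hnext : h + 1 = H + 1 - k := by omega
      have ihs : ∀ s', |V (h + 1) s' - V' (h + 1) s'| ≤ k * B := by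
        intro s'; rw [hnext]; exact ih hk' s'
      rw [hV h h1 h2 s, hV' h h1 h2 s, hT, hT']
      have e1 : ∑ s', (((P h s) s').toReal - ((P' h s) s').toReal) * V (h + 1) s'
          = ∑ s', ((P h s) s').toReal * V (h + 1) s'
            - ∑ s', ((P' h s) s').toReal * V (h + 1) s' := by
        rw [← Finset.sum_sub_distrib]
        exact Finset.sum_congr rfl fun s' _ => by ring
      have e2 : ∑ s', ((P' h s) s').toReal * (V (h + 1) s' - V' (h + 1) s')
          = ∑ s', ((P' h s) s').toReal * V (h + 1) s'
            - ∑ s', ((P' h s) s').toReal * V' (h + 1) s' := by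
        rw [← Finset.sum_sub_distrib]
        exact Finset.sum_congr rfl fun s' _ => by ring
      have expand : (r h s + ∑ s', ((P h s) s').toReal * V (h + 1) s')
          - (r' h s + ∑ s', ((P' h s) s').toReal * V' (h + 1) s')
          = (r h s - r' h s)
            + (∑ s', (((P h s) s').toReal - ((P' h s) s').toReal) * V (h + 1) s')
            + (∑ s', ((P' h s) s').toReal * (V (h + 1) s' - V' (h + 1) s')) := by
        rw [e1, e2]; ring
      rw [expand]
      have b1 : |r h s - r' h s| ≤ εr := hr h h1 h2 s
      have b2 : |∑ s', (((P h s) s').toReal - ((P' h s) s').toReal) * V (h + 1) s'|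
          ≤ (H : ℝ) * εP := by
        calc |∑ s', (((P h s) s').toReal - ((P' h s) s').toReal) * V (h + 1) s'|
            ≤ ∑ s', |(((P h s) s').toReal - ((P' h s) s').toReal) * V (h + 1) s'| :=
              Finset.abs_sum_le_sum_abs _ _
          _ ≤ ∑ s', |((P h s) s').toReal - ((P' h s) s').toReal| * (H : ℝ) := by
              apply Finset.sum_le_sum
              intro s' _
              rw [abs_mul]
              exact mul_le_mul_of_nonneg_left (hVb h h1 h2 s') (abs_nonneg _)
          _ = (∑ s', |((P h s) s').toReal - ((P' h s) s').toReal|) * (H : ℝ) := by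
              rw [← Finset.sum_mul]
          _ ≤ εP * (H : ℝ) :=
              mul_le_mul_of_nonneg_right (hPb h h1 h2 s) (Nat.cast_nonneg H)
          _ = (H : ℝ) * εP := by ring
      have b3 : |∑ s', ((P' h s) s').toReal * (V (h + 1) s' - V' (h + 1) s')|
          ≤ k * B := by
        calc |∑ s', ((P' h s) s').toReal * (V (h + 1) s' - V' (h + 1) s')|
            ≤ ∑ s', |((P' h s) s').toReal * (V (h + 1) s' - V' (h + 1) s')| :=
              Finset.abs_sum_le_sum_abs _ _
          _ ≤ ∑ s', ((P' h s) s').toReal * (k * B) := by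
              apply Finset.sum_le_sum
              intro s' _
              rw [abs_mul, abs_of_nonneg ENNReal.toReal_nonneg]
              exact mul_le_mul_of_nonneg_left (ihs s') ENNReal.toReal_nonneg
          _ = (∑ s', ((P' h s) s').toReal) * (k * B) := by rw [← Finset.sum_mul]
          _ = k * B := by rw [pmf_sum_one]; ring
      have := abs_add_three (r h s - r' h s)
        (∑ s', (((P h s) s').toReal - ((P' h s) s').toReal) * V (h + 1) s')
        (∑ s', ((P' h s) s').toReal * (V (h + 1) s' - V' (h + 1) s'))
      push_cast
      have : ((k : ℝ) + 1) * B = εr + (H : ℝ) * εP + k * B := by rw [hBdef]; ring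
      rw [this]
      calc _ ≤ _ := abs_add_three _ _ _
        _ ≤ εr + (H : ℝ) * εP + k * B := by gcongr
  have hfin : ∀ s, |V 1 s - V' 1 s| ≤ (H : ℝ) * B := by
    intro s
    have := key H le_rfl s
    rw [show H + 1 - H = 1 by omega] at this
    exact this
  calc |∑ s, (ρ s).toReal * (V 1 s - V' 1 s)|
      ≤ ∑ s, |(ρ s).toReal * (V 1 s - V' 1 s)| := Finset.abs_sum_le_sum_abs _ _
    _ ≤ ∑ s, (ρ s).toReal * ((H : ℝ) * B) := by
        apply Finset.sum_le_sum
        intro s _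
        rw [abs_mul, abs_of_nonneg ENNReal.toReal_nonneg]
        exact mul_le_mul_of_nonneg_left (hfin s) ENNReal.toReal_nonneg
    _ = (∑ s, (ρ s).toReal) * ((H : ℝ) * B) := by rw [← Finset.sum_mul]
    _ = (H : ℝ) * B := by rw [pmf_sum_one]; ring
end

section
/- Minimax existence for bilinear games on simplices: for a finite matrix game with payoff function (p, q) ↦ Σ_{a,b} p(a) q(b) G(a,b) where G : A × B → ℝ and p, q range over the probability simplices Δ(A), Δ(B) for finite sets A, B, the max-min equals the min-max: max_{p ∈ Δ(A)} min_{q ∈ Δ(B)} p^T G q = min_{q ∈ Δ(B)} max_{p ∈ Δ(A)} p^T G q, and both extrema are attained. -/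
/-! The payoff is a bilinear form, so on the compact convex simplices it is continuous and affine
in each variable, and Sion's minimax theorem provides a saddle point `(q⋆, p⋆)`. At a saddle point
both iterated extrema are attained and equal the saddle value. -/

section SaddlePoint

variable {E F : Type*} {X : Set E} {Y : Set F} {f : E → F → ℝ} {a : E} {b : F}

theorem IsSaddlePointOn.ciSup_eq (ha : a ∈ X) (hb : b ∈ Y) (h : IsSaddlePointOn X Y f a b) :
    ⨆ y : Y, f a y = f a b :=
  have : Nonempty Y := ⟨⟨b, hb⟩⟩
  IsLUB.ciSup_eq <| IsGreatest.isLUB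
    ⟨⟨⟨b, hb⟩, rfl⟩, by rintro _ ⟨y, rfl⟩; exact h a ha y y.2⟩

theorem IsSaddlePointOn.ciInf_eq (ha : a ∈ X) (hb : b ∈ Y) (h : IsSaddlePointOn X Y f a b) :
    ⨅ x : X, f x b = f a b :=
  have : Nonempty X := ⟨⟨a, ha⟩⟩
  IsGLB.ciInf_eq <| IsLeast.isGLB
    ⟨⟨⟨a, ha⟩, rfl⟩, by rintro _ ⟨x, rfl⟩; exact h x x.2 b hb⟩

theorem IsSaddlePointOn.ciSup_ciInf_eq (ha : a ∈ X) (hb : b ∈ Y) (h : IsSaddlePointOn X Y f a b)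
    -- an unbounded `⨅` over `ℝ` would take the junk value `0`
    (hbdd : ∀ y ∈ Y, BddBelow ((f · y) '' X)) :
    ⨆ y : Y, ⨅ x : X, f x y = f a b := by
  have : Nonempty Y := ⟨⟨b, hb⟩⟩
  refine IsLUB.ciSup_eq <| IsGreatest.isLUB ⟨⟨⟨b, hb⟩, h.ciInf_eq ha hb⟩, ?_⟩
  rintro _ ⟨y, rfl⟩
  calc ⨅ x : X, f x y ≤ f a y := by
        refine ciInf_le (f := fun x : X => f x y) ?_ ⟨a, ha⟩
        simpa only [Set.image_eq_range] using hbdd y y.2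
    _ ≤ f a b := h a ha y y.2

theorem IsSaddlePointOn.ciInf_ciSup_eq (ha : a ∈ X) (hb : b ∈ Y) (h : IsSaddlePointOn X Y f a b)
    (hbdd : ∀ x ∈ X, BddAbove (f x '' Y)) :
    ⨅ x : X, ⨆ y : Y, f x y = f a b := by
  have : Nonempty X := ⟨⟨a, ha⟩⟩
  refine IsGLB.ciInf_eq <| IsLeast.isGLB ⟨⟨⟨a, ha⟩, h.ciSup_eq ha hb⟩, ?_⟩
  rintro _ ⟨x, rfl⟩
  calc f a b ≤ f x b := h x x.2 b hb
    _ ≤ ⨆ y : Y, f x y := by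
        refine le_ciSup (f := fun y : Y => f x y) ?_ ⟨b, hb⟩
        simpa only [Set.image_eq_range] using hbdd x x.2

end SaddlePoint

theorem LinearMap.exists_isSaddlePointOn {E F : Type*}
    [TopologicalSpace E] [AddCommGroup E] [Module ℝ E] [IsTopologicalAddGroup E]
    [ContinuousSMul ℝ E] [T2Space E] [FiniteDimensional ℝ E]
    [TopologicalSpace F] [AddCommGroup F] [Module ℝ F] [IsTopologicalAddGroup F]
    [ContinuousSMul ℝ F] [T2Space F] [FiniteDimensional ℝ F]
    (L : E →ₗ[ℝ] F →ₗ[ℝ] ℝ) {X : Set E} {Y : Set F}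
    (neX : X.Nonempty) (cX : Convex ℝ X) (kX : IsCompact X)
    (neY : Y.Nonempty) (cY : Convex ℝ Y) (kY : IsCompact Y) :
    ∃ a ∈ X, ∃ b ∈ Y, IsSaddlePointOn X Y (fun x y => L x y) a b :=
  Sion.exists_isSaddlePointOn neX cX kX
    (fun y _ => (L.flip y).continuous_of_finiteDimensional.continuousOn.lowerSemicontinuousOn)
    (fun y _ => ((L.flip y).convexOn cX).quasiconvexOn) cY neY kY
    (fun x _ => (L x).continuous_of_finiteDimensional.continuousOn.upperSemicontinuousOn)
    (fun x _ => ((L x).concaveOn cY).quasiconcaveOn)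

theorem stmt_19 {A B : Type*} [Fintype A] [Fintype B] [Nonempty A] [Nonempty B]
    (G : A → B → ℝ) :
    (⨆ p : stdSimplex ℝ A, ⨅ q : stdSimplex ℝ B,
        ∑ a, ∑ b, (p : A → ℝ) a * (q : B → ℝ) b * G a b) =
      (⨅ q : stdSimplex ℝ B, ⨆ p : stdSimplex ℝ A,
        ∑ a, ∑ b, (p : A → ℝ) a * (q : B → ℝ) b * G a b) ∧
    (∃ pstar : stdSimplex ℝ A,
      (⨅ q : stdSimplex ℝ B, ∑ a, ∑ b, (pstar : A → ℝ) a * (q : B → ℝ) b * G a b) =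
        ⨆ p : stdSimplex ℝ A, ⨅ q : stdSimplex ℝ B,
          ∑ a, ∑ b, (p : A → ℝ) a * (q : B → ℝ) b * G a b) ∧
    (∃ qstar : stdSimplex ℝ B,
      (⨆ p : stdSimplex ℝ A, ∑ a, ∑ b, (p : A → ℝ) a * (qstar : B → ℝ) b * G a b) =
        ⨅ q : stdSimplex ℝ B, ⨆ p : stdSimplex ℝ A,
          ∑ a, ∑ b, (p : A → ℝ) a * (q : B → ℝ) b * G a b) := by
  classical
  have hpayoff (q : B → ℝ) (p : A → ℝ) :
      (Matrix.toLinearMap₂' ℝ (Matrix.of G)).flip q p = ∑ a, ∑ b, p a * q b * G a b := by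
    simp only [LinearMap.flip_apply, Matrix.toLinearMap₂'_apply, Matrix.of_apply, smul_eq_mul,
      mul_assoc]
  -- `IsSaddlePointOn` minimises in the first variable, so the minimising player `q` comes first
  obtain ⟨qstar, hq, pstar, hp, hsaddle⟩ :=
    (Matrix.toLinearMap₂' ℝ (Matrix.of G)).flip.exists_isSaddlePointOn
      ⟨_, single_mem_stdSimplex ℝ (Classical.arbitrary B)⟩ (convex_stdSimplex ℝ B)
      (isCompact_stdSimplex ℝ B)
      ⟨_, single_mem_stdSimplex ℝ (Classical.arbitrary A)⟩ (convex_stdSimplex ℝ A)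
      (isCompact_stdSimplex ℝ A)
  simp only [hpayoff] at hsaddle
  have hbddAbove (q : B → ℝ) (_ : q ∈ stdSimplex ℝ B) :
      BddAbove ((fun p : A → ℝ => ∑ a, ∑ b, p a * q b * G a b) '' stdSimplex ℝ A) :=
    (isCompact_stdSimplex ℝ A).bddAbove_image (by fun_prop)
  have hbddBelow (p : A → ℝ) (_ : p ∈ stdSimplex ℝ A) :
      BddBelow ((fun q : B → ℝ => ∑ a, ∑ b, p a * q b * G a b) '' stdSimplex ℝ B) :=
    (isCompact_stdSimplex ℝ B).bddBelow_image (by fun_prop)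
  have hmaxmin := hsaddle.ciSup_ciInf_eq hq hp hbddBelow
  have hminmax := hsaddle.ciInf_ciSup_eq hq hp hbddAbove
  exact ⟨hmaxmin.trans hminmax.symm, ⟨⟨pstar, hp⟩, (hsaddle.ciInf_eq hq hp).trans hmaxmin.symm⟩,
    ⟨⟨qstar, hq⟩, (hsaddle.ciSup_eq hq hp).trans hminmax.symm⟩⟩
end
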